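/- Let {(Zᵢ,Xᵢ)}_{i=1}^n be i.i.d. with joint pmf p_{ZX} on a product of finite alphabets 𝒵 × 𝒳, let ε, ε' > 0 and b₀ > 0, and let Θ ≜ 𝟙{ (Zⁿ,Xⁿ) ∈ 𝒜_{ε,ε'}^{(n)}(Z,X) and Zⁿ ∈ ℬ_{ε,ε'}^{(n)}(Z,X) }. Then for every zⁿ ∈ ℬ_{ε,ε'}^{(n)}(Z,X) with p(zⁿ) > 0, the conditional collision entropy satisfies H_c(Xⁿ | Zⁿ = zⁿ, Θ = 1) ≥ n( H(X|Z) − ε − ε' ) + log₂( 1 − 2^{−n b₀ ε} ), where H(X|Z) ≜ H(Z,X) − H(Z). -/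

import Mathlib

open Finset Real
open scoped Classical BigOperators

/-- Shannon entropy (in bits) of a pmf on a finite alphabet, with the convention `0 log 0 = 0`. -/
noncomputable def shannonEntropy {W : Type*} [Fintype W] (q : W → ℝ) : ℝ :=
  - ∑ w, q w * Real.logb 2 (q w)

/-- Probability of an i.i.d. sequence: `p(wⁿ) = ∏ᵢ p(wᵢ)`. -/
noncomputable def seqProb {W : Type*} (q : W → ℝ) {n : ℕ} (w : Fin n → W) : ℝ :=
  ∏ i, q (w i)

/-- The deviation `f(wⁿ) = |−(1/n) log₂ p(wⁿ) − H(W)|` of the empirical entropy. -/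
noncomputable def fdev {W : Type*} [Fintype W] (q : W → ℝ) {n : ℕ} (w : Fin n → W) : ℝ :=
  |(-(1 / (n : ℝ))) * Real.logb 2 (seqProb q w) - shannonEntropy q|

/-- Chernoff exponent `C_W^{(1)}(ε) = inf_{s>0} ( ln 𝔼[q(W)^{−s/ln 2}] − s(H(W)+ε) )`. -/
noncomputable def chernoff1 {W : Type*} [Fintype W] (q : W → ℝ) (ε : ℝ) : ℝ :=
  sInf ((fun s : ℝ =>
    Real.log (∑ w ∈ Finset.univ.filter (fun w => 0 < q w), q w ^ (1 - s / Real.log 2))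
      - s * (shannonEntropy q + ε)) '' Set.Ioi 0)

/-- Chernoff exponent `C_W^{(2)}(ε) = inf_{s>0} ( ln 𝔼[q(W)^{s/ln 2}] − s(−H(W)+ε) )`. -/
noncomputable def chernoff2 {W : Type*} [Fintype W] (q : W → ℝ) (ε : ℝ) : ℝ :=
  sInf ((fun s : ℝ =>
    Real.log (∑ w ∈ Finset.univ.filter (fun w => 0 < q w), q w ^ (1 + s / Real.log 2))
      - s * (-shannonEntropy q + ε)) '' Set.Ioi 0)

/-- Marginal on the first component of a joint pmf. -/
noncomputable def margFst {X Y : Type*} [Fintype Y] (p : X × Y → ℝ) (x : X) : ℝ :=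
  ∑ y, p (x, y)

/-- Marginal on the second component of a joint pmf. -/
noncomputable def margSnd {X Y : Type*} [Fintype X] (p : X × Y → ℝ) (y : Y) : ℝ :=
  ∑ x, p (x, y)

/-- The sequence of pairs associated to a pair of sequences. -/
def pairSeq {X Y : Type*} {n : ℕ} (w : (Fin n → X) × (Fin n → Y)) : Fin n → X × Y :=
  fun i => (w.1 i, w.2 i)

/-- Joint probability `p(xⁿ,yⁿ) = ∏ᵢ p(xᵢ,yᵢ)` of a pair of i.i.d. sequences. -/
noncomputable def jointSeqProb {X Y : Type*} (p : X × Y → ℝ) {n : ℕ}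
    (w : (Fin n → X) × (Fin n → Y)) : ℝ :=
  ∏ i, p (w.1 i, w.2 i)

/-- The typical set `𝒜_{ε,ε'}^{(n)}(X,Y)`: `f(xⁿ) ≤ ε`, `f(yⁿ) ≤ ε'`, `f(xⁿ,yⁿ) ≤ ε'`. -/
def typical {X Y : Type*} [Fintype X] [Fintype Y] (p : X × Y → ℝ)
    (ε ε' : ℝ) {n : ℕ} (w : (Fin n → X) × (Fin n → Y)) : Prop :=
  fdev (margFst p) w.1 ≤ ε ∧ fdev (margSnd p) w.2 ≤ ε' ∧ fdev p (pairSeq w) ≤ ε'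

/-- Conditional probability `ℙ[ (Xⁿ,Yⁿ) ∉ 𝒜_{ε,ε'}^{(n)}(X,Y) | Xⁿ = xⁿ ]`
(for `xⁿ` with `p(xⁿ) > 0`). -/
noncomputable def condNotTyp {X Y : Type*} [Fintype X] [Fintype Y] (p : X × Y → ℝ)
    (ε ε' : ℝ) {n : ℕ} (xn : Fin n → X) : ℝ :=
  (∑ yn ∈ Finset.univ.filter (fun yn : Fin n → Y => ¬ typical p ε ε' (xn, yn)),
      jointSeqProb p (xn, yn)) / seqProb (margFst p) xn

/-- The event `{Θ = 1} = { (zⁿ,xⁿ) : (zⁿ,xⁿ) ∈ 𝒜_{ε,ε'}^{(n)}(Z,X) and zⁿ ∈ ℬ_{ε,ε'}^{(n)}(Z,X) }`. -/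
def thetaOne {Z X : Type*} [Fintype Z] [Fintype X] (p : Z × X → ℝ) (ε ε' b₀ : ℝ) {n : ℕ}
    (w : (Fin n → Z) × (Fin n → X)) : Prop :=
  typical p ε ε' w ∧ condNotTyp p ε ε' w.1 ≤ (2 : ℝ) ^ (-((n : ℝ) * b₀ * ε))

/-- The conditional distribution `ℙ(Xⁿ = xⁿ | Zⁿ = zⁿ, Θ = 1)`. -/
noncomputable def condDistTheta {Z X : Type*} [Fintype Z] [Fintype X] (p : Z × X → ℝ)
    (ε ε' b₀ : ℝ) {n : ℕ} (zn : Fin n → Z) (xn : Fin n → X) : ℝ :=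
  (if thetaOne p ε ε' b₀ (zn, xn) then jointSeqProb p (zn, xn) else 0) /
    (∑ xn' : Fin n → X, if thetaOne p ε ε' b₀ (zn, xn') then jointSeqProb p (zn, xn') else 0)

/-! Conditioned on `Zⁿ = zⁿ` and `Θ = 1`, the law of `Xⁿ` is `p(zⁿ, ·)` restricted to the jointly
typical `xⁿ`, renormalised by `ℙ(Zⁿ = zⁿ, Θ = 1) = p(zⁿ) (1 - ℙ[(Zⁿ,Xⁿ) ∉ 𝒜 | Zⁿ = zⁿ])`.
Collision entropy dominates min-entropy, so it suffices to bound each conditional probability by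
`2^{-n(H(Z,X) - ε')} / (2^{-n(H(Z) + ε)} (1 - 2^{-n b₀ ε}))`. The numerator comes from joint
typicality, the bound `2^{-n(H(Z) + ε)} ≤ p(zⁿ)` from the typicality of `zⁿ` (witnessed by any `xⁿ`
with `Θ = 1`), and the last factor from `zⁿ ∈ ℬ`. -/

section CollisionEntropy

variable {ι : Type*} [Fintype ι]

theorem sum_sq_div_sum_le (F : ι → ℝ) (hF : ∀ i, 0 ≤ F i) {M : ℝ} (hM : ∀ i, F i ≤ M) :
    ∑ i, (F i / ∑ j, F j) ^ 2 ≤ M / ∑ j, F j := by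
  have hS0 : 0 ≤ ∑ j, F j := sum_nonneg fun i _ => hF i
  generalize hS : ∑ j, F j = S at hS0 ⊢
  rcases hS0.eq_or_lt with rfl | hS0
  · simp
  calc ∑ i, (F i / S) ^ 2 ≤ ∑ i, M / S * (F i / S) := by
        gcongr with i
        rw [sq]
        gcongr
        · exact div_nonneg (hF i) hS0.le
        · exact hM i
    _ = M / S := by rw [← mul_sum, ← sum_div, hS, div_self hS0.ne', mul_one]

theorem logb_div_le_neg_logb_sum_sq_div_sum (F : ι → ℝ) (hF : ∀ i, 0 ≤ F i) {M L : ℝ}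
    (hM : ∀ i, F i ≤ M) (hL : 0 < L) (hLS : L ≤ ∑ j, F j) :
    logb 2 (L / M) ≤ -logb 2 (∑ i, (F i / ∑ j, F j) ^ 2) := by
  set S := ∑ j, F j
  have hS : 0 < S := hL.trans_le hLS
  obtain ⟨i, -, hi⟩ := exists_ne_zero_of_sum_ne_zero hS.ne'
  replace hi : 0 < F i := (hF i).lt_of_ne' hi
  have hC : 0 < ∑ i, (F i / S) ^ 2 :=
    sum_pos' (fun _ _ => sq_nonneg _) ⟨i, mem_univ i, by positivity⟩
  have hML : M / S ≤ M / L := div_le_div_of_nonneg_left (hi.le.trans (hM i)) hL hLS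
  calc logb 2 (L / M) = -logb 2 (M / L) := by rw [← logb_inv, inv_div]
    _ ≤ -logb 2 (∑ i, (F i / S) ^ 2) :=
      neg_le_neg <|
        logb_le_logb_of_le one_lt_two hC ((sum_sq_div_sum_le F hF hM).trans hML)

end CollisionEntropy

section Typicality

variable {W : Type*} [Fintype W] {q : W → ℝ} {n : ℕ} {w : Fin n → W} {ε : ℝ}

theorem abs_logb_seqProb_add_le_of_fdev_le (hn : 0 < n) (h : fdev q w ≤ ε) :
    |logb 2 (seqProb q w) + n * shannonEntropy q| ≤ n * ε := by
  have hn' : (0 : ℝ) < n := by exact_mod_cast hn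
  have hfdev : fdev q w = |logb 2 (seqProb q w) + n * shannonEntropy q| / n := by
    rw [fdev, ← abs_neg, ← abs_of_pos hn', ← abs_div, abs_of_pos hn']
    congr 1
    field_simp
    ring
  rwa [hfdev, div_le_iff₀ hn', mul_comm ε] at h

theorem rpow_neg_le_seqProb_of_fdev_le (hn : 0 < n) (hw : 0 < seqProb q w)
    (h : fdev q w ≤ ε) : (2 : ℝ) ^ (-(n * (shannonEntropy q + ε))) ≤ seqProb q w := by
  rw [← le_logb_iff_rpow_le one_lt_two hw]
  linarith [(abs_le.mp (abs_logb_seqProb_add_le_of_fdev_le hn h)).1]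

theorem seqProb_le_rpow_neg_of_fdev_le (hn : 0 < n) (hw : 0 ≤ seqProb q w)
    (h : fdev q w ≤ ε) : seqProb q w ≤ (2 : ℝ) ^ (-(n * (shannonEntropy q - ε))) := by
  rcases hw.eq_or_lt with hw | hw
  · rw [← hw]
    positivity
  rw [← logb_le_iff_le_rpow one_lt_two hw]
  linarith [(abs_le.mp (abs_logb_seqProb_add_le_of_fdev_le hn h)).2]

end Typicality

section Sequences

variable {Z X : Type*} {p : Z × X → ℝ} {n : ℕ}

theorem jointSeqProb_nonneg (hp : ∀ zx, 0 ≤ p zx) (w : (Fin n → Z) × (Fin n → X)) :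
    0 ≤ jointSeqProb p w :=
  prod_nonneg fun _ _ => hp _

theorem sum_jointSeqProb_eq_seqProb_margFst [Fintype X] (zn : Fin n → Z) :
    ∑ xn : Fin n → X, jointSeqProb p (zn, xn) = seqProb (margFst p) zn :=
  (Fintype.prod_sum fun i x => p (zn i, x)).symm

theorem sum_typical_jointSeqProb_eq [Fintype Z] [Fintype X] (ε ε' : ℝ) {zn : Fin n → Z}
    (hzn : seqProb (margFst p) zn ≠ 0) :
    ∑ xn with typical p ε ε' (zn, xn), jointSeqProb p (zn, xn)
      = (1 - condNotTyp p ε ε' zn) * seqProb (margFst p) zn := by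
  rw [sub_mul, one_mul, condNotTyp, div_mul_cancel₀ _ hzn,
    ← sum_jointSeqProb_eq_seqProb_margFst,
    ← sum_filter_add_sum_filter_not univ fun xn => typical p ε ε' (zn, xn)]
  ring

end Sequences

section ThetaConditioning

variable {Z X : Type*} [Fintype Z] [Fintype X] {p : Z × X → ℝ} {ε ε' b₀ : ℝ} {n : ℕ}

/-- `ℙ(Zⁿ = zⁿ, Xⁿ = xⁿ, Θ = 1)`. -/
noncomputable def thetaWeight (p : Z × X → ℝ) (ε ε' b₀ : ℝ) (zn : Fin n → Z) (xn : Fin n → X) :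
    ℝ :=
  if thetaOne p ε ε' b₀ (zn, xn) then jointSeqProb p (zn, xn) else 0

theorem condDistTheta_eq (zn : Fin n → Z) (xn : Fin n → X) :
    condDistTheta p ε ε' b₀ zn xn
      = thetaWeight p ε ε' b₀ zn xn / ∑ xn', thetaWeight p ε ε' b₀ zn xn' :=
  rfl

theorem thetaWeight_nonneg (hp : ∀ zx, 0 ≤ p zx) (zn : Fin n → Z) (xn : Fin n → X) :
    0 ≤ thetaWeight p ε ε' b₀ zn xn := by
  unfold thetaWeight
  split_ifs
  exacts [jointSeqProb_nonneg hp _, le_rfl]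

theorem thetaWeight_le_rpow (hp : ∀ zx, 0 ≤ p zx) (hn : 0 < n) (zn : Fin n → Z)
    (xn : Fin n → X) :
    thetaWeight p ε ε' b₀ zn xn ≤ (2 : ℝ) ^ (-(n * (shannonEntropy p - ε'))) := by
  unfold thetaWeight
  split_ifs with hθ
  · exact seqProb_le_rpow_neg_of_fdev_le hn (jointSeqProb_nonneg hp _) hθ.1.2.2
  · positivity

theorem fdev_margFst_le_of_thetaWeight_ne_zero {zn : Fin n → Z} {xn : Fin n → X}
    (h : thetaWeight p ε ε' b₀ zn xn ≠ 0) : fdev (margFst p) zn ≤ ε := by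
  unfold thetaWeight at h
  split_ifs at h with hθ
  exacts [hθ.1.1, (h rfl).elim]

theorem sum_thetaWeight_eq {zn : Fin n → Z}
    (hzn : condNotTyp p ε ε' zn ≤ (2 : ℝ) ^ (-((n : ℝ) * b₀ * ε)))
    (hpzn : seqProb (margFst p) zn ≠ 0) :
    ∑ xn, thetaWeight p ε ε' b₀ zn xn
      = (1 - condNotTyp p ε ε' zn) * seqProb (margFst p) zn := by
  rw [← sum_typical_jointSeqProb_eq ε ε' hpzn, sum_filter]
  exact sum_congr rfl fun xn _ => if_congr (and_iff_left hzn) rfl rfl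

end ThetaConditioning

theorem cond_collision_entropy_lower_bound_general
    {Z X : Type*} [Fintype Z] [Fintype X] (p : Z × X → ℝ)
    (hp : ∀ zx, 0 ≤ p zx)
    (n : ℕ) (ε ε' b₀ : ℝ) (hε : 0 < ε) (hb₀ : 0 < b₀)
    (zn : Fin n → Z)
    (hzn : condNotTyp p ε ε' zn ≤ (2 : ℝ) ^ (-((n : ℝ) * b₀ * ε)))
    (hpzn : 0 < seqProb (margFst p) zn) :
    - Real.logb 2 (∑ xn : Fin n → X, (condDistTheta p ε ε' b₀ zn xn) ^ 2)
      ≥ (n : ℝ) * ((shannonEntropy p - shannonEntropy (margFst p)) - ε - ε')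
        + Real.logb 2 (1 - (2 : ℝ) ^ (-((n : ℝ) * b₀ * ε))) := by
  set D : ℝ := (2 : ℝ) ^ (-((n : ℝ) * b₀ * ε))
  have hF := thetaWeight_nonneg (ε := ε) (ε' := ε') (b₀ := b₀) hp zn
  have hS : (1 - D) * seqProb (margFst p) zn ≤ ∑ xn, thetaWeight p ε ε' b₀ zn xn := by
    rw [sum_thetaWeight_eq hzn hpzn.ne']
    exact mul_le_mul_of_nonneg_right (by linarith) hpzn.le
  simp only [condDistTheta_eq]
  rcases n.eq_zero_or_pos with rfl | hn
  -- for `n = 0` the right-hand side is `logb 2 0 = 0`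
  · have hC := sum_sq_div_sum_le _ hF fun xn => single_le_sum (fun y _ => hF y) (mem_univ xn)
    simp only [D, CharP.cast_eq_zero, zero_mul, neg_zero, rpow_zero, sub_self, logb_zero,
      add_zero, ge_iff_le, neg_nonneg]
    exact logb_nonpos one_lt_two (sum_nonneg fun _ _ => sq_nonneg _) (hC.trans (div_self_le_one _))
  have hD : D < 1 :=
    rpow_lt_one_of_one_lt_of_neg one_lt_two (by simp only [neg_neg_iff_pos]; positivity)
  obtain ⟨xn₀, -, hxn₀⟩ :=
    exists_ne_zero_of_sum_ne_zero ((mul_pos (by linarith) hpzn).trans_le hS).ne'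
  have hpz :=
    rpow_neg_le_seqProb_of_fdev_le hn hpzn (fdev_margFst_le_of_thetaWeight_ne_zero hxn₀)
  have hbound := logb_div_le_neg_logb_sum_sq_div_sum _ hF (thetaWeight_le_rpow hp hn zn)
    (mul_pos (by linarith) (by positivity))
    (hS.trans' (mul_le_mul_of_nonneg_left hpz (by linarith)))
  rw [logb_div (by positivity) (by positivity), logb_mul (by linarith) (by positivity),
    logb_rpow two_pos (by norm_num), logb_rpow two_pos (by norm_num)] at hbound
  linarith

/-- For every `zⁿ ∈ ℬ_{ε,ε'}^{(n)}(Z,X)` with `p(zⁿ) > 0`, the conditional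
collision entropy satisfies
`H_c(Xⁿ | Zⁿ = zⁿ, Θ = 1) ≥ n( H(X|Z) − ε − ε' ) + log₂( 1 − 2^{−n b₀ ε} )`,
where `H(X|Z) = H(Z,X) − H(Z)`. -/
theorem cond_collision_entropy_lower_bound
    {Z X : Type*} [Fintype Z] [Fintype X] (p : Z × X → ℝ)
    (hp : ∀ zx, 0 ≤ p zx) (hsum : ∑ zx, p zx = 1)
    (n : ℕ) (ε ε' b₀ : ℝ) (hε : 0 < ε) (hε' : 0 < ε') (hb₀ : 0 < b₀)
    (zn : Fin n → Z)
    (hzn : condNotTyp p ε ε' zn ≤ (2 : ℝ) ^ (-((n : ℝ) * b₀ * ε)))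
    (hpzn : 0 < seqProb (margFst p) zn) :
    - Real.logb 2 (∑ xn : Fin n → X, (condDistTheta p ε ε' b₀ zn xn) ^ 2)
      ≥ (n : ℝ) * ((shannonEntropy p - shannonEntropy (margFst p)) - ε - ε')
        + Real.logb 2 (1 - (2 : ℝ) ^ (-((n : ℝ) * b₀ * ε))) :=
  cond_collision_entropy_lower_bound_general p hp n ε ε' b₀ hε hb₀ zn hzn hpzn
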